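/- arXiv:1712.02324 — 2 statements merged into one kernel-verified Lean document; each statement's English description precedes it below -/
import Mathlib

section
/- For the set-graph G_{A^{(n)}}, n ≥ 1, there is a proper colouring with χ(G_{A^{(n)}}) = 2^{n-1} colours under which every one of the 2^n − 1 vertices yields a rainbow neighbourhood; moreover this holds for every proper χ-colouring, so r^−_χ(G_{A^{(n)}}) = r^+_χ(G_{A^{(n)}}) = 2^n − 1. -/
/-- The set-graph: vertices are nonempty subsets of an `n`-element set,
two distinct subsets adjacent iff they intersect. -/
def setGraph (n : ℕ) : SimpleGraph {s : Finset (Fin n) // s.Nonempty} where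
  Adj a b := a ≠ b ∧ (a.1 ∩ b.1).Nonempty
  symm := by
    constructor
    intro a b h
    exact ⟨h.1.symm, by rw [Finset.inter_comm]; exact h.2⟩
  loopless := by constructor; intro a h; exact h.1 rfl

/-!
The vertices containing a fixed point `a` form a clique of size `2 ^ (n - 1)`, which is the
number of colours, so every proper colouring uses all colours on it. Each vertex `v` contains
some `a`, and that whole clique lies in the closed neighbourhood of `v`.
-/

open Finset

lemma Finset.card_filter_mem_univ {α : Type*} [Fintype α] [DecidableEq α] (a : α) :
    #{s : Finset α | a ∈ s} = 2 ^ (Fintype.card α - 1) := by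
  have hinsert : ({s : Finset α | a ∈ s} : Finset (Finset α)) =
      (univ.erase a).powerset.image (insert a) := by
    ext s
    simp only [mem_filter, mem_univ, true_and, mem_image, mem_powerset]
    refine ⟨fun ha => ⟨s.erase a, fun x hx => ?_, insert_erase ha⟩, ?_⟩
    · simpa using ne_of_mem_erase hx
    · rintro ⟨t, -, rfl⟩
      exact mem_insert_self a t
  have hinj : Set.InjOn (insert a) ((univ.erase a).powerset : Set (Finset α)) := by
    intro t ht t' ht' h
    have hat : a ∉ t := fun hat => by simpa using mem_powerset.1 ht hat
    have hat' : a ∉ t' := fun hat' => by simpa using mem_powerset.1 ht' hat'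
    rw [← erase_insert hat, h, erase_insert hat']
  rw [hinsert, card_image_of_injOn hinj, card_powerset, card_erase_of_mem (mem_univ a), card_univ]

lemma Fintype.card_finset_nonempty (α : Type*) [Fintype α] :
    Fintype.card {s : Finset α // s.Nonempty} = 2 ^ Fintype.card α - 1 := by
  classical
  simp only [nonempty_iff_ne_empty, Fintype.card_subtype_compl, Fintype.card_finset,
    Fintype.card_unique]

namespace setGraph

variable {n : ℕ}

lemma adj_of_mem {a : Fin n} {u v : {s : Finset (Fin n) // s.Nonempty}} (hu : a ∈ u.1)
    (hv : a ∈ v.1) (huv : u ≠ v) : (setGraph n).Adj u v :=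
  ⟨huv, a, mem_inter.2 ⟨hu, hv⟩⟩

def star (a : Fin n) : Finset {s : Finset (Fin n) // s.Nonempty} := {v | a ∈ v.1}

@[simp]
lemma mem_star {a : Fin n} {v : {s : Finset (Fin n) // s.Nonempty}} : v ∈ star a ↔ a ∈ v.1 := by
  simp [star]

lemma isClique_star (a : Fin n) : (setGraph n).IsClique (star a : Set _) :=
  fun _ hu _ hv huv => adj_of_mem (mem_star.1 hu) (mem_star.1 hv) huv

lemma card_star (a : Fin n) : #(star a) = 2 ^ (n - 1) := by
  have hmap : (star a).map (Function.Embedding.subtype _) =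
      ({s : Finset (Fin n) | a ∈ s} : Finset _) := by
    ext s
    simp only [mem_map, mem_star, Function.Embedding.subtype_apply, mem_filter, mem_univ,
      true_and]
    exact ⟨by rintro ⟨v, hv, rfl⟩; exact hv, fun hs => ⟨⟨s, a, hs⟩, hs, rfl⟩⟩
  rw [← card_map, hmap, card_filter_mem_univ, Fintype.card_fin]

end setGraph

theorem setGraph_rainbow_general (n : ℕ) :
    ∀ c : (setGraph n).Coloring (Fin (2 ^ (n - 1))),
      {v : {s : Finset (Fin n) // s.Nonempty} |
        ∀ i : Fin (2 ^ (n - 1)), ∃ u, (u = v ∨ (setGraph n).Adj v u) ∧ c u = i}.ncard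
        = 2 ^ n - 1 := by
  intro c
  have hrainbow : ∀ v : {s : Finset (Fin n) // s.Nonempty}, ∀ i,
      ∃ u, (u = v ∨ (setGraph n).Adj v u) ∧ c u = i := by
    intro v i
    obtain ⟨a, ha⟩ := v.2
    obtain ⟨u, hu, rfl⟩ := c.surjOn_of_card_le_isClique (setGraph.isClique_star a)
      (by rw [setGraph.card_star, Fintype.card_fin]) (Set.mem_univ i)
    refine ⟨u, ?_, rfl⟩
    by_cases huv : u = v
    · exact .inl huv
    · exact .inr (setGraph.adj_of_mem ha (setGraph.mem_star.1 hu) (Ne.symm huv))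
  simp only [hrainbow, implies_true, Set.ofPred_true, Set.ncard_univ, Nat.card_eq_fintype_card,
    Fintype.card_finset_nonempty, Fintype.card_fin]

theorem setGraph_rainbow (n : ℕ) (hn : 1 ≤ n) :
    ∀ c : (setGraph n).Coloring (Fin (2 ^ (n - 1))),
      {v : {s : Finset (Fin n) // s.Nonempty} |
        ∀ i : Fin (2 ^ (n - 1)), ∃ u, (u = v ∨ (setGraph n).Adj v u) ∧ c u = i}.ncard
        = 2 ^ n - 1 :=
  setGraph_rainbow_general n
end

section
/- For the cycle C_n, n ≥ 3, the maximax independence chromatic number equals the chromatic number: χ^{i-max}(C_n) = 2 if n is even and 3 if n is odd. -/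
/-- A set of vertices is independent if no two of its members are adjacent. -/
def IsIndep {V : Type*} (G : SimpleGraph V) (S : Set V) : Prop :=
  S.Pairwise fun u v => ¬ G.Adj u v

/-- The independence number of `G` restricted to the vertex set `R`. -/
noncomputable def indepNumOn {V : Type*} (G : SimpleGraph V) (R : Set V) : ℕ :=
  sSup {k : ℕ | ∃ S : Set V, S ⊆ R ∧ IsIndep G S ∧ S.ncard = k}

/-- `S` is a maximum independent set of `G` restricted to `R`. -/
def IsMaxIndepOn {V : Type*} (G : SimpleGraph V) (R S : Set V) : Prop :=
  S ⊆ R ∧ IsIndep G S ∧ S.ncard = indepNumOn G R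

/-- One step of the maximax independence procedure on remaining vertex set `R`:
remove a maximum independent set `S` chosen so that the remaining graph has
minimum independence number among all choices of maximum independent set. -/
def IsMaximaxStep {V : Type*} (G : SimpleGraph V) (R S : Set V) : Prop :=
  IsMaxIndepOn G R S ∧
    ∀ T : Set V, IsMaxIndepOn G R T → indepNumOn G (R \ S) ≤ indepNumOn G (R \ T)

/-- `IsMaximaxSeq G R L` : the list `L` of colour classes is obtained by iterating
the maximax independence procedure starting from remaining vertex set `R`,
until no vertex remains. -/
def IsMaximaxSeq {V : Type*} (G : SimpleGraph V) : Set V → List (Set V) → Prop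
  | R, [] => R = ∅
  | R, S :: L => S.Nonempty ∧ IsMaximaxStep G R S ∧ IsMaximaxSeq G (R \ S) L

/-- `χ^{i-max}(G) = ℓ` : the maximax independence, maximum proper colouring of `G`
uses exactly `ℓ` colours. -/
def ChiImaxEq {V : Type*} (G : SimpleGraph V) (ℓ : ℕ) : Prop :=
  (∃ L, IsMaximaxSeq G Set.univ L ∧ L.length = ℓ) ∧
    ∀ L, IsMaximaxSeq G Set.univ L → L.length = ℓ

/-!
A maximum independent set `T` of `C_n` has `⌊n/2⌋` vertices, and counting the vertices of `T`,
their successors, and the "gaps" `u` with `u, u + 1 ∉ T` shows that `T` leaves exactly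
`n mod 2` gaps. For even `n` the complement of `T` is therefore independent, and the procedure
stops after a second colour. For odd `n` the complement is independent up to one edge, so
whatever the procedure does next it needs exactly two more colours. In both cases every choice
of `T` leaves a remainder of the same independence number, so every maximum independent set is
an admissible first colour class.
-/

open Set

def MaximaxLengthEq {V : Type*} (G : SimpleGraph V) (R : Set V) (ℓ : ℕ) : Prop :=
  (∃ L, IsMaximaxSeq G R L ∧ L.length = ℓ) ∧ ∀ L, IsMaximaxSeq G R L → L.length = ℓ

section IndepNum

variable {V : Type*} {G : SimpleGraph V} {R S : Set V}

lemma isIndep_singleton (x : V) : IsIndep G {x} := pairwise_singleton _ _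

lemma nonempty_ncard_isIndep :
    {k : ℕ | ∃ S : Set V, S ⊆ R ∧ IsIndep G S ∧ S.ncard = k}.Nonempty :=
  ⟨0, ∅, empty_subset R, pairwise_empty _, ncard_empty V⟩

lemma indepNumOn_le {m : ℕ} (h : ∀ S ⊆ R, IsIndep G S → S.ncard ≤ m) :
    indepNumOn G R ≤ m :=
  csSup_le nonempty_ncard_isIndep fun _ ⟨S, hSR, hS, hk⟩ => hk ▸ h S hSR hS

variable [Finite V]

lemma bddAbove_ncard_isIndep :
    BddAbove {k : ℕ | ∃ S : Set V, S ⊆ R ∧ IsIndep G S ∧ S.ncard = k} :=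
  ⟨Nat.card V, by rintro _ ⟨S, -, -, rfl⟩; exact ncard_le_card S⟩

lemma ncard_le_indepNumOn (hSR : S ⊆ R) (hS : IsIndep G S) : S.ncard ≤ indepNumOn G R :=
  le_csSup bddAbove_ncard_isIndep ⟨S, hSR, hS, rfl⟩

lemma exists_isMaxIndepOn (G : SimpleGraph V) (R : Set V) : ∃ S, IsMaxIndepOn G R S := by
  obtain ⟨S, hSR, hS, hcard⟩ :=
    Nat.sSup_mem (nonempty_ncard_isIndep (G := G) (R := R)) bddAbove_ncard_isIndep
  exact ⟨S, hSR, hS, hcard⟩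

lemma indepNumOn_of_isIndep (h : IsIndep G R) : indepNumOn G R = R.ncard :=
  (indepNumOn_le fun _ hSR _ => ncard_le_ncard hSR).antisymm (ncard_le_indepNumOn subset_rfl h)

lemma indepNumOn_lt_ncard {a b : V} (ha : a ∈ R) (hb : b ∈ R) (hab : G.Adj a b) :
    indepNumOn G R < R.ncard := by
  have hpos : 0 < R.ncard := (ncard_pos).2 ⟨a, ha⟩
  suffices indepNumOn G R ≤ R.ncard - 1 by omega
  refine indepNumOn_le fun S hSR hS => ?_
  have hSR' : S ⊂ R := ssubset_of_subset_of_ne hSR <| by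
    rintro rfl
    exact hS ha hb hab.ne hab
  have := ncard_lt_ncard hSR'
  omega

lemma IsMaxIndepOn.ncard_diff (h : IsMaxIndepOn G R S) :
    (R \ S).ncard = R.ncard - indepNumOn G R := by
  rw [ncard_sdiff h.1, h.2.2]

lemma IsMaxIndepOn.nonempty (h : IsMaxIndepOn G R S) (hR : R.Nonempty) : S.Nonempty := by
  obtain ⟨x, hx⟩ := hR
  have := ncard_le_indepNumOn (singleton_subset_iff.2 hx) (isIndep_singleton (G := G) x)
  rw [ncard_singleton, ← h.2.2] at this
  exact (ncard_pos).1 this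

end IndepNum

section Maximax

variable {V : Type*} {G : SimpleGraph V} {R : Set V}

lemma maximaxLengthEq_empty : MaximaxLengthEq G ∅ 0 := by
  refine ⟨⟨[], rfl, rfl⟩, ?_⟩
  rintro (_ | ⟨S, L⟩) h
  · rfl
  · obtain ⟨hS, ⟨⟨hSR, -⟩, -⟩, -⟩ := h
    exact absurd (hS.mono hSR) not_nonempty_empty

variable [Finite V]

/-- The common value `k` makes every maximum independent set an admissible colour class. -/
lemma maximaxLengthEq_succ {k ℓ : ℕ} (hR : R.Nonempty)
    (h : ∀ T, IsMaxIndepOn G R T → indepNumOn G (R \ T) = k ∧ MaximaxLengthEq G (R \ T) ℓ) :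
    MaximaxLengthEq G R (ℓ + 1) := by
  constructor
  · obtain ⟨T, hT⟩ := exists_isMaxIndepOn G R
    obtain ⟨hk, ⟨L, hL, hlen⟩, -⟩ := h T hT
    refine ⟨T :: L, ⟨hT.nonempty hR, ⟨hT, fun T' hT' => ?_⟩, hL⟩, by simp [hlen]⟩
    rw [hk, (h T' hT').1]
  · rintro (_ | ⟨T, L⟩) hL
    · exact absurd hL hR.ne_empty
    · obtain ⟨-, ⟨hT, -⟩, hL⟩ := hL
      simp [(h T hT).2.2 L hL]

lemma maximaxLengthEq_one_of_isIndep (hR : IsIndep G R) (hne : R.Nonempty) :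
    MaximaxLengthEq G R 1 := by
  refine maximaxLengthEq_succ (k := 0) hne fun T hT => ?_
  have hRT : R \ T = ∅ := by
    rw [← ncard_eq_zero, hT.ncard_diff, indepNumOn_of_isIndep hR, Nat.sub_self]
  rw [hRT]
  exact ⟨(indepNumOn_of_isIndep (pairwise_empty _)).trans (ncard_empty V), maximaxLengthEq_empty⟩

lemma maximaxLengthEq_two_of_indepNumOn_add_one (h : indepNumOn G R + 1 = R.ncard) :
    MaximaxLengthEq G R 2 := by
  refine maximaxLengthEq_succ (k := 1) ((ncard_pos).1 (by omega)) fun T hT => ?_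
  obtain ⟨x, hx⟩ := ncard_eq_one.1 (show (R \ T).ncard = 1 by rw [hT.ncard_diff]; omega)
  rw [hx]
  exact ⟨(indepNumOn_of_isIndep (isIndep_singleton x)).trans (ncard_singleton x),
    maximaxLengthEq_one_of_isIndep (isIndep_singleton x) (singleton_nonempty x)⟩

end Maximax

section Cycle

open SimpleGraph

variable {k : ℕ}

lemma cycleGraph_adj_add_one (u : Fin (k + 2)) : (cycleGraph (k + 2)).Adj u (u + 1) :=
  cycleGraph_adj.2 (Or.inr (add_sub_cancel_left u 1))

lemma eq_add_one_or_of_cycleGraph_adj {u v : Fin (k + 2)} (h : (cycleGraph (k + 2)).Adj u v) :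
    v = u + 1 ∨ u = v + 1 := by
  rcases cycleGraph_adj.1 h with h | h
  · exact Or.inr (sub_eq_iff_eq_add'.1 h)
  · exact Or.inl (sub_eq_iff_eq_add'.1 h)

def cycleGaps (S : Set (Fin (k + 2))) : Set (Fin (k + 2)) := {u | u ∉ S ∧ u + 1 ∉ S}

/-- `S` and its predecessor set `(· + 1) ⁻¹' S` are disjoint and their union misses exactly the
gaps. -/
lemma two_mul_ncard_add_ncard_cycleGaps {S : Set (Fin (k + 2))}
    (hS : IsIndep (cycleGraph (k + 2)) S) :
    2 * S.ncard + (cycleGaps S).ncard = k + 2 := by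
  set P := (· + 1) ⁻¹' S
  have hP : P.ncard = S.ncard :=
    ncard_preimage_of_injective_subset_range (add_left_injective 1)
      (fun u _ => ⟨u - 1, sub_add_cancel u 1⟩)
  have hdisj : Disjoint S P := by
    refine disjoint_left.2 fun u hu (hu1 : u + 1 ∈ S) => ?_
    exact hS hu hu1 (cycleGraph_adj_add_one u).ne (cycleGraph_adj_add_one u)
  have hcompl : (S ∪ P)ᶜ = cycleGaps S := by
    ext u
    simp [P, cycleGaps]
  have := ncard_add_ncard_compl (S ∪ P)
  rw [hcompl, ncard_union_eq hdisj, hP, Nat.card_eq_fintype_card, Fintype.card_fin] at this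
  omega

lemma isIndep_compl_diff_cycleGaps (S : Set (Fin (k + 2))) :
    IsIndep (cycleGraph (k + 2)) (Sᶜ \ cycleGaps S) := by
  rintro u ⟨hu, hug⟩ v ⟨hv, hvg⟩ - huv
  rcases eq_add_one_or_of_cycleGraph_adj huv with rfl | rfl
  · exact hug ⟨hu, hv⟩
  · exact hvg ⟨hv, hu⟩

lemma isIndep_range_two_mul :
    IsIndep (cycleGraph (k + 2))
      (range fun i : Fin ((k + 2) / 2) => (⟨2 * i, by omega⟩ : Fin (k + 2))) := by
  rintro _ ⟨i, rfl⟩ _ ⟨j, rfl⟩ - hij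
  rcases eq_add_one_or_of_cycleGraph_adj hij with h | h <;>
  · rw [Fin.ext_iff, Fin.val_add_one_of_lt (by simp [Fin.lt_def]; omega)] at h
    simp only at h
    omega

lemma cycleGraph_indepNumOn_univ : indepNumOn (cycleGraph (k + 2)) univ = (k + 2) / 2 := by
  refine (indepNumOn_le fun S _ hS => ?_).antisymm ?_
  · have := two_mul_ncard_add_ncard_cycleGaps hS
    omega
  · have := ncard_le_indepNumOn (subset_univ _) (isIndep_range_two_mul (k := k))
    rwa [ncard_range_of_injective fun i j h => Fin.ext (by simpa using h), Nat.card_eq_fintype_card,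
      Fintype.card_fin] at this

variable {T : Set (Fin (k + 2))} (hT : IsMaxIndepOn (cycleGraph (k + 2)) univ T)
include hT

lemma IsMaxIndepOn.ncard_cycleGaps : (cycleGaps T).ncard = (k + 2) % 2 := by
  have := two_mul_ncard_add_ncard_cycleGaps hT.2.1
  rw [hT.2.2, cycleGraph_indepNumOn_univ] at this
  omega

lemma IsMaxIndepOn.ncard_univ_diff_cycleGraph :
    (univ \ T).ncard = k + 2 - (k + 2) / 2 := by
  rw [hT.ncard_diff, cycleGraph_indepNumOn_univ, ncard_univ, Nat.card_eq_fintype_card,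
    Fintype.card_fin]

lemma IsMaxIndepOn.isIndep_univ_diff_of_even (he : Even (k + 2)) :
    IsIndep (cycleGraph (k + 2)) (univ \ T) := by
  have hgaps : cycleGaps T = ∅ := by
    rw [← ncard_eq_zero, hT.ncard_cycleGaps, Nat.even_iff.1 he]
  simpa [hgaps, compl_eq_univ_sdiff] using isIndep_compl_diff_cycleGaps T

lemma IsMaxIndepOn.indepNumOn_univ_diff_add_one_of_odd (ho : Odd (k + 2)) :
    indepNumOn (cycleGraph (k + 2)) (univ \ T) + 1 = (univ \ T).ncard := by
  obtain ⟨w, hw⟩ := ncard_eq_one.1 (hT.ncard_cycleGaps.trans (Nat.odd_iff.1 ho))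
  have hwT : w ∈ univ \ T ∧ w + 1 ∈ univ \ T := by
    have : w ∈ cycleGaps T := hw ▸ mem_singleton w
    exact ⟨⟨mem_univ w, this.1⟩, ⟨mem_univ _, this.2⟩⟩
  have hlt := indepNumOn_lt_ncard hwT.1 hwT.2 (cycleGraph_adj_add_one w)
  have hindep : IsIndep (cycleGraph (k + 2)) ((univ \ T) \ {w}) := by
    rw [← hw, ← compl_eq_univ_sdiff]
    exact isIndep_compl_diff_cycleGaps T
  have hge := ncard_le_indepNumOn sdiff_subset hindep
  rw [ncard_sdiff_singleton_of_mem hwT.1] at hge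
  omega

end Cycle

theorem cycleGraph_chiImax (n : ℕ) (hn : 3 ≤ n) :
    (Even n → ChiImaxEq (SimpleGraph.cycleGraph n) 2) ∧
    (Odd n → ChiImaxEq (SimpleGraph.cycleGraph n) 3) := by
  obtain ⟨k, rfl⟩ : ∃ k, n = k + 2 := ⟨n - 2, by omega⟩
  refine ⟨fun he => ?_, fun ho => ?_⟩
  · refine maximaxLengthEq_succ (k := k + 2 - (k + 2) / 2) univ_nonempty fun T hT => ?_
    have hindep := hT.isIndep_univ_diff_of_even he
    have hcard := hT.ncard_univ_diff_cycleGraph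
    exact ⟨(indepNumOn_of_isIndep hindep).trans hcard,
      maximaxLengthEq_one_of_isIndep hindep ((ncard_pos).1 (by omega))⟩
  · refine maximaxLengthEq_succ (k := k + 2 - (k + 2) / 2 - 1) univ_nonempty fun T hT => ?_
    have hnum := hT.indepNumOn_univ_diff_add_one_of_odd ho
    have hcard := hT.ncard_univ_diff_cycleGraph
    exact ⟨by omega, maximaxLengthEq_two_of_indepNumOn_add_one hnum⟩
end
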